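/- arXiv:1311.1876 — 2 statements merged into one kernel-verified Lean document; each statement's English description precedes it below -/
import Mathlib

section
/- Suppose B ≠ 0 and Q > 0. Then α is differentiable on [0,T], satisfies α′(t) + (𝔸(t) + C)α(t) + (BD/R)β(t) − H = 0 for all t ∈ [0,T], and satisfies the terminal condition α(T) = −K. -/
open Real Set

noncomputable section

/-- Bundle of the real model constants of the mean-field LQG game. -/
structure P where
  A : ℝ
  B : ℝ
  C : ℝ
  D : ℝ
  F : ℝ
  H : ℝ
  K : ℝ
  L : ℝ
  Q : ℝ
  R : ℝ
  S : ℝ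
  eta : ℝ
  sig : ℝ
  N0 : ℝ
  T : ℝ
  x0 : ℝ

namespace P

variable (p : P)

/-- `a := A + σ²/2`. -/
def a : ℝ := p.A + p.sig ^ 2 / 2

/-- `λ := √(a² + B²Q/R)`. -/
def lam : ℝ := Real.sqrt (p.a ^ 2 + p.B ^ 2 * p.Q / p.R)

/-- `β(t) := Q(e^{2λ(T−t)} − 1)/[(λ − a)e^{2λ(T−t)} + (λ + a)]`. -/
def beta (t : ℝ) : ℝ :=
  p.Q * (Real.exp (2 * p.lam * (p.T - t)) - 1) /
    ((p.lam - p.a) * Real.exp (2 * p.lam * (p.T - t)) + (p.lam + p.a))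

/-- `𝔸(t) := A − (B²/R)β(t)`. -/
def AA (t : ℝ) : ℝ := p.A - p.B ^ 2 / p.R * p.beta t

/-- `Γₛᵗ := exp(∫ₛᵗ 𝔸(r) dr)`. -/
def Gam (s t : ℝ) : ℝ := Real.exp (∫ r in s..t, p.AA r)

/-- `Γ̄ := exp(∫₀ᵀ |𝔸(r)| dr)`. -/
def GamBar : ℝ := Real.exp (∫ r in (0 : ℝ)..p.T, |p.AA r|)

/-- `Θ₆(s) := (BD/R)β(s) − H`. -/
def Th6 (s : ℝ) : ℝ := p.B * p.D / p.R * p.beta s - p.H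

/-- `α(t) := −K e^{C(T−t)} Γₜᵀ + ∫ₜᵀ e^{C(v−t)} Γₜᵛ Θ₆(v) dv`. -/
def alpha (t : ℝ) : ℝ :=
  -p.K * Real.exp (p.C * (p.T - t)) * p.Gam t p.T +
    ∫ v in t..p.T, Real.exp (p.C * (v - t)) * p.Gam t v * p.Th6 v

/-- `ζ(t) := −α(t)`. -/
def zeta (t : ℝ) : ℝ := -p.alpha t

/-- `ξ(t) := ∫ₜᵀ e^{2C(v−t)} [(BD/R − (B²/R)α(v))ζ(v) + D²/R − (BD/R)α(v)] dv`. -/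
def xi (t : ℝ) : ℝ :=
  ∫ v in t..p.T, Real.exp (2 * p.C * (v - t)) *
    ((p.B * p.D / p.R - p.B ^ 2 / p.R * p.alpha v) * p.zeta v +
      p.D ^ 2 / p.R - p.B * p.D / p.R * p.alpha v)

/-- `Θ₁(s) := ((B²/R)α(s) − BD/R)·N₀/(1 + ξ(0)N₀)`. -/
def Th1 (s : ℝ) : ℝ :=
  (p.B ^ 2 / p.R * p.alpha s - p.B * p.D / p.R) * p.N0 / (1 + p.xi 0 * p.N0)

/-- `Θ₂(r) := −((B²/R)ζ(r) + BD/R)`. -/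
def Th2 (r : ℝ) : ℝ := -(p.B ^ 2 / p.R * p.zeta r + p.B * p.D / p.R)

/-- `Θ₃(v) := Fβ(v) − QS`. -/
def Th3 (v : ℝ) : ℝ := p.F * p.beta v - p.Q * p.S

/-- `Θ₄(r) := Fζ(r) + L`. -/
def Th4 (r : ℝ) : ℝ := p.F * p.zeta r + p.L

/-- `Θ̄₁ := ∫₀ᵀ |Θ₁(s)| ds`. -/
def ThBar1 : ℝ := ∫ s in (0 : ℝ)..p.T, |p.Th1 s|

/-- `Θ̄₂ := ∫₀ᵀ |Θ₂(s)| ds`. -/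
def ThBar2 : ℝ := ∫ s in (0 : ℝ)..p.T, |p.Th2 s|

/-- `Θ̄₃ := ∫₀ᵀ |Θ₃(s)| ds`. -/
def ThBar3 : ℝ := ∫ s in (0 : ℝ)..p.T, |p.Th3 s|

/-- `Θ̄₄ := ∫₀ᵀ |Θ₄(s)| ds`. -/
def ThBar4 : ℝ := ∫ s in (0 : ℝ)..p.T, |p.Th4 s|

/-- `γ[x̄](t) := ∫ₜᵀ Γₜᵛ (Θ₃(v)x̄(v) − Qη) dv`. -/
def gam (xb : ℝ → ℝ) (t : ℝ) : ℝ :=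
  ∫ v in t..p.T, p.Gam t v * (p.Th3 v * xb v - p.Q * p.eta)

/-- `τ[x̄](t)`, the second force-rate function. -/
def tau (xb : ℝ → ℝ) (t : ℝ) : ℝ :=
  (∫ r in t..p.T, Real.exp (p.C * (r - t)) * p.Th2 r *
      (∫ v in r..p.T, p.Gam r v * (p.Th3 v * xb v - p.Q * p.eta))) +
    ∫ r in t..p.T, Real.exp (p.C * (r - t)) * p.Th4 r * xb r

/-- The fixed-point map `𝒯` of the consistency condition system. -/
def Tmap (xb : ℝ → ℝ) (t : ℝ) : ℝ :=
  p.Gam 0 t * Real.exp (p.F * t) * p.x0 +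
    ∫ s in (0 : ℝ)..t, p.Gam s t * Real.exp (p.F * (t - s)) *
      ((p.zeta 0 * p.x0 + p.tau xb 0) * p.Th1 s * Real.exp (p.C * s) -
        p.B ^ 2 / p.R * p.gam xb s)

end P

section MyAux

open MeasureTheory intervalIntegral

variable (p : P)

/-- Antiderivative of `𝔸` starting at `0`. -/
def myG (t : ℝ) : ℝ := ∫ r in (0 : ℝ)..t, p.AA r

lemma my_lam_gt (hQ : 0 < p.Q) (hR : 0 < p.R) (hB : p.B ≠ 0) : |p.a| < p.lam := by
  have hpos : 0 < p.B ^ 2 * p.Q / p.R := by positivity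
  have h : p.a ^ 2 < p.a ^ 2 + p.B ^ 2 * p.Q / p.R := by linarith
  have := Real.sqrt_lt_sqrt (sq_nonneg _) h
  rwa [Real.sqrt_sq_eq_abs] at this

lemma my_den_pos (hQ : 0 < p.Q) (hR : 0 < p.R) (hB : p.B ≠ 0) (t : ℝ) :
    0 < (p.lam - p.a) * Real.exp (2 * p.lam * (p.T - t)) + (p.lam + p.a) := by
  have h := my_lam_gt p hQ hR hB
  have h1 : 0 < p.lam - p.a := by have := neg_abs_le p.a; have := le_abs_self p.a; linarith
  have h2 : 0 < p.lam + p.a := by have := neg_abs_le p.a; have := le_abs_self p.a; linarith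
  have := Real.exp_pos (2 * p.lam * (p.T - t))
  nlinarith

lemma my_beta_cont (hQ : 0 < p.Q) (hR : 0 < p.R) (hB : p.B ≠ 0) :
    Continuous p.beta := by
  have hc : Continuous fun t : ℝ => Real.exp (2 * p.lam * (p.T - t)) :=
    Real.continuous_exp.comp (continuous_const.mul (continuous_const.sub continuous_id))
  exact (continuous_const.mul (hc.sub continuous_const)).div
    ((continuous_const.mul hc).add continuous_const)
    (fun t => (my_den_pos p hQ hR hB t).ne')

lemma my_AA_cont (hQ : 0 < p.Q) (hR : 0 < p.R) (hB : p.B ≠ 0) :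
    Continuous p.AA :=
  continuous_const.sub (continuous_const.mul (my_beta_cont p hQ hR hB))

lemma my_Th6_cont (hQ : 0 < p.Q) (hR : 0 < p.R) (hB : p.B ≠ 0) :
    Continuous p.Th6 :=
  (continuous_const.mul (my_beta_cont p hQ hR hB)).sub continuous_const

lemma myG_hasDerivAt (hQ : 0 < p.Q) (hR : 0 < p.R) (hB : p.B ≠ 0) (t : ℝ) :
    HasDerivAt (myG p) (p.AA t) t := by
  have hc := my_AA_cont p hQ hR hB
  exact intervalIntegral.integral_hasDerivAt_right (hc.intervalIntegrable 0 t)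
    (hc.stronglyMeasurableAtFilter _ _) hc.continuousAt

lemma my_gam_eq (hQ : 0 < p.Q) (hR : 0 < p.R) (hB : p.B ≠ 0) (s v : ℝ) :
    Real.exp (p.C * (v - s)) * p.Gam s v =
      Real.exp (-(p.C * s + myG p s)) * Real.exp (p.C * v + myG p v) := by
  have hc := my_AA_cont p hQ hR hB
  have h : myG p v - myG p s = ∫ r in s..v, p.AA r :=
    intervalIntegral.integral_interval_sub_left (hc.intervalIntegrable 0 v)
      (hc.intervalIntegrable 0 s)
  unfold P.Gam
  rw [← h, ← Real.exp_add, ← Real.exp_add]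
  congr 1
  ring

lemma my_alpha_eq (hQ : 0 < p.Q) (hR : 0 < p.R) (hB : p.B ≠ 0) (t : ℝ) :
    p.alpha t = Real.exp (-(p.C * t + myG p t)) *
      (-p.K * Real.exp (p.C * p.T + myG p p.T) +
        ∫ v in t..p.T, Real.exp (p.C * v + myG p v) * p.Th6 v) := by
  unfold P.alpha
  rw [mul_add, ← intervalIntegral.integral_const_mul]
  congr 1
  · rw [mul_assoc, my_gam_eq p hQ hR hB]
    ring
  · apply intervalIntegral.integral_congr
    intro v _
    dsimp only
    rw [my_gam_eq p hQ hR hB]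
    ring

lemma my_alpha_hasDerivAt (hQ : 0 < p.Q) (hR : 0 < p.R) (hB : p.B ≠ 0) (t : ℝ) :
    HasDerivAt p.alpha (-(p.C + p.AA t) * p.alpha t - p.Th6 t) t := by
  set h : ℝ → ℝ := fun v => Real.exp (p.C * v + myG p v) * p.Th6 v with hh
  have hGcont : Continuous (myG p) :=
    continuous_iff_continuousAt.2 fun s => (myG_hasDerivAt p hQ hR hB s).continuousAt
  have hhcont : Continuous h :=
    (Real.continuous_exp.comp ((continuous_const.mul continuous_id).add hGcont)).mul
      (my_Th6_cont p hQ hR hB)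
  -- derivative of the integral term
  have hI : HasDerivAt (fun u => ∫ v in u..p.T, h v) (-(h t)) t := by
    have h1 : HasDerivAt (fun u => ∫ v in p.T..u, h v) (h t) t :=
      intervalIntegral.integral_hasDerivAt_right (hhcont.intervalIntegrable _ _)
        (hhcont.stronglyMeasurableAtFilter _ _) hhcont.continuousAt
    have h2 : (fun u => ∫ v in u..p.T, h v) = fun u => -∫ v in p.T..u, h v := by
      funext u; rw [intervalIntegral.integral_symm]
    rw [h2]
    exact h1.neg
  have hφ : HasDerivAt (fun u : ℝ => -(p.C * u + myG p u)) (-(p.C + p.AA t)) t := by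
    exact (((hasDerivAt_id t).const_mul p.C).add (myG_hasDerivAt p hQ hR hB t)).neg.congr_deriv (by ring)
  have hE : HasDerivAt (fun u : ℝ => Real.exp (-(p.C * u + myG p u)))
      (Real.exp (-(p.C * t + myG p t)) * (-(p.C + p.AA t))) t := hφ.exp
  have hprod := hE.mul (((hasDerivAt_const t
      (-p.K * Real.exp (p.C * p.T + myG p p.T))).add hI))
  have halpha : p.alpha = fun u => Real.exp (-(p.C * u + myG p u)) *
      (-p.K * Real.exp (p.C * p.T + myG p p.T) + ∫ v in u..p.T, h v) :=
    funext (my_alpha_eq p hQ hR hB)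
  have hcancel : Real.exp (-(p.C * t + myG p t)) * h t = p.Th6 t := by
    rw [hh]
    simp only [← mul_assoc, ← Real.exp_add]
    rw [neg_add_cancel, Real.exp_zero, one_mul]
  rw [halpha]
  have key : -(p.C + p.AA t) *
      (Real.exp (-(p.C * t + myG p t)) *
        (-p.K * Real.exp (p.C * p.T + myG p p.T) + ∫ v in t..p.T, h v)) - p.Th6 t =
      Real.exp (-(p.C * t + myG p t)) * -(p.C + p.AA t) *
        (-p.K * Real.exp (p.C * p.T + myG p p.T) + ∫ v in t..p.T, h v) +
      Real.exp (-(p.C * t + myG p t)) * -h t := by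
    rw [← hcancel]; ring
  dsimp only
  rw [key]
  exact hprod.congr_deriv (by simp only [Pi.add_apply]; ring)

end MyAux

/-- `α` is differentiable on `[0,T]`, satisfies
`α′(t) + (𝔸(t) + C)α(t) + (BD/R)β(t) − H = 0` on `[0,T]`, and `α(T) = −K`. -/
theorem alpha_solves_ode (p : P) (hT : 0 < p.T) (hQ : 0 < p.Q) (hR : 0 < p.R)
    (hB : p.B ≠ 0) :
    DifferentiableOn ℝ p.alpha (Set.Icc 0 p.T) ∧
      (∀ t ∈ Set.Icc 0 p.T,
        derivWithin p.alpha (Set.Icc 0 p.T) t + (p.AA t + p.C) * p.alpha t +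
          p.B * p.D / p.R * p.beta t - p.H = 0) ∧
      p.alpha p.T = -p.K := by
  have hD : ∀ t, HasDerivAt p.alpha (-(p.C + p.AA t) * p.alpha t - p.Th6 t) t :=
    my_alpha_hasDerivAt p hQ hR hB
  refine ⟨fun t _ => (hD t).differentiableAt.differentiableWithinAt, fun t ht => ?_, ?_⟩
  · have hu : UniqueDiffWithinAt ℝ (Set.Icc 0 p.T) t := (uniqueDiffOn_Icc hT) t ht
    rw [((hD t).hasDerivWithinAt).derivWithin hu]
    unfold P.Th6
    ring
  · unfold P.alpha P.Gam
    simp [intervalIntegral.integral_same]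

end
end

section
/- Suppose B ≠ 0 and Q > 0, and set ζ(t) := −α(t). Then ξ is differentiable on [0,T], satisfies ξ′(t) + 2Cξ(t) + (BD/R − (B²/R)α(t))ζ(t) + D²/R − (BD/R)α(t) = 0 for all t ∈ [0,T], and satisfies the terminal condition ξ(T) = 0. -/
open Real Set

noncomputable section

section Aux

open intervalIntegral

lemma abs_a_lt_lam (p : P) (hQ : 0 < p.Q) (hR : 0 < p.R) (hB : p.B ≠ 0) :
    |p.a| < p.lam := by
  have hB2 : 0 < p.B ^ 2 * p.Q / p.R := by positivity
  have h1 : p.a ^ 2 < p.a ^ 2 + p.B ^ 2 * p.Q / p.R := by linarith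
  have := Real.sqrt_lt_sqrt (sq_nonneg p.a) h1
  rwa [Real.sqrt_sq_eq_abs] at this

lemma continuous_beta (p : P) (hQ : 0 < p.Q) (hR : 0 < p.R) (hB : p.B ≠ 0) :
    Continuous p.beta := by
  have ha := abs_a_lt_lam p hQ hR hB
  obtain ⟨h1, h2⟩ := abs_lt.mp ha
  apply Continuous.div
  · continuity
  · continuity
  · intro t
    have he := Real.exp_pos (2 * p.lam * (p.T - t))
    nlinarith

end Aux

/-- `ξ` is differentiable on `[0,T]`, satisfies
`ξ′(t) + 2Cξ(t) + (BD/R − (B²/R)α(t))ζ(t) + D²/R − (BD/R)α(t) = 0` on `[0,T]`, and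
`ξ(T) = 0`, where `ζ := −α`. -/
theorem xi_solves_ode (p : P) (hT : 0 < p.T) (hQ : 0 < p.Q) (hR : 0 < p.R)
    (hB : p.B ≠ 0) :
    DifferentiableOn ℝ p.xi (Set.Icc 0 p.T) ∧
      (∀ t ∈ Set.Icc 0 p.T,
        derivWithin p.xi (Set.Icc 0 p.T) t + 2 * p.C * p.xi t +
          (p.B * p.D / p.R - p.B ^ 2 / p.R * p.alpha t) * p.zeta t +
          p.D ^ 2 / p.R - p.B * p.D / p.R * p.alpha t = 0) ∧
      p.xi p.T = 0 := by
  have ha := abs_a_lt_lam p hQ hR hB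
  obtain ⟨ha1, ha2⟩ := abs_lt.mp ha
  have hbeta : Continuous p.beta := continuous_beta p hQ hR hB
  have hAA : Continuous p.AA :=
    continuous_const.sub (continuous_const.mul hbeta)
  have hTh6 : Continuous p.Th6 :=
    (continuous_const.mul hbeta).sub continuous_const
  set I : ℝ → ℝ := fun t => ∫ r in (0 : ℝ)..t, p.AA r with hIdef
  have hIder : ∀ t, HasDerivAt I (p.AA t) t := fun t =>
    intervalIntegral.integral_hasDerivAt_right (hAA.intervalIntegrable _ _)
      (hAA.stronglyMeasurableAtFilter _ _) hAA.continuousAt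
  have hI : Continuous I :=
    continuous_iff_continuousAt.mpr fun t => (hIder t).differentiableAt.continuousAt
  have hGam : ∀ t v, p.Gam t v = Real.exp (I v - I t) := by
    intro t v
    unfold P.Gam
    congr 1
    rw [← intervalIntegral.integral_interval_sub_left (hAA.intervalIntegrable 0 v)
      (hAA.intervalIntegrable 0 t)]
  have hexp : ∀ t v : ℝ, Real.exp (p.C * (v - t)) * p.Gam t v =
      Real.exp (-(p.C * t + I t)) * Real.exp (p.C * v + I v) := by
    intro t v
    rw [hGam, ← Real.exp_add, ← Real.exp_add]
    congr 1
    ring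
  have hh : Continuous fun v => Real.exp (p.C * v + I v) * p.Th6 v :=
    ((continuous_const.mul continuous_id).add hI).rexp.mul hTh6
  have halpha_eq : ∀ t, p.alpha t =
      Real.exp (-(p.C * t + I t)) *
        (-p.K * Real.exp (p.C * p.T + I p.T) +
          ∫ v in t..p.T, Real.exp (p.C * v + I v) * p.Th6 v) := by
    intro t
    unfold P.alpha
    rw [mul_add, ← intervalIntegral.integral_const_mul]
    congr 1
    · rw [mul_assoc, hexp t p.T]; ring
    · apply intervalIntegral.integral_congr
      intro v _
      dsimp only
      rw [hexp t v]; ring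
  have hJder : ∀ t, HasDerivAt (fun t => ∫ v in t..p.T,
      Real.exp (p.C * v + I v) * p.Th6 v)
      (-(Real.exp (p.C * t + I t) * p.Th6 t)) t := fun t =>
    intervalIntegral.integral_hasDerivAt_left (hh.intervalIntegrable _ _)
      (hh.stronglyMeasurableAtFilter _ _) hh.continuousAt
  have hJ : Continuous fun t => ∫ v in t..p.T, Real.exp (p.C * v + I v) * p.Th6 v :=
    continuous_iff_continuousAt.mpr fun t => (hJder t).differentiableAt.continuousAt
  have halpha : Continuous p.alpha := by
    have : Continuous fun t => Real.exp (-(p.C * t + I t)) *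
        (-p.K * Real.exp (p.C * p.T + I p.T) +
          ∫ v in t..p.T, Real.exp (p.C * v + I v) * p.Th6 v) :=
      (((continuous_const.mul continuous_id).add hI).neg.rexp).mul
        (continuous_const.add hJ)
    exact this.congr fun t => (halpha_eq t).symm
  set G : ℝ → ℝ := fun v =>
    (p.B * p.D / p.R - p.B ^ 2 / p.R * p.alpha v) * p.zeta v +
      p.D ^ 2 / p.R - p.B * p.D / p.R * p.alpha v with hGdef
  have hzeta : Continuous p.zeta := halpha.neg
  have hG : Continuous G := by
    apply Continuous.sub
    · exact ((continuous_const.sub (continuous_const.mul halpha)).mul hzeta).add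
        continuous_const
    · exact continuous_const.mul halpha
  set g : ℝ → ℝ := fun v => Real.exp (2 * p.C * v) * G v with hgdef
  have hg : Continuous g := ((continuous_const.mul continuous_id).rexp).mul hG
  have hxi_eq : ∀ t, p.xi t = Real.exp (-(2 * p.C * t)) * ∫ v in t..p.T, g v := by
    intro t
    unfold P.xi
    rw [← intervalIntegral.integral_const_mul]
    apply intervalIntegral.integral_congr
    intro v _
    show Real.exp (2 * p.C * (v - t)) * _ = _
    rw [hgdef]
    dsimp only
    rw [← mul_assoc, ← Real.exp_add]
    congr 2
    ring
  have hFider : ∀ t, HasDerivAt (fun t => ∫ v in t..p.T, g v) (-(g t)) t := fun t =>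
    intervalIntegral.integral_hasDerivAt_left (hg.intervalIntegrable _ _)
      (hg.stronglyMeasurableAtFilter _ _) hg.continuousAt
  have hxider : ∀ t, HasDerivAt p.xi (-(2 * p.C) * p.xi t - G t) t := by
    intro t
    have h1 : HasDerivAt (fun t => Real.exp (-(2 * p.C * t)))
        (-(2 * p.C) * Real.exp (-(2 * p.C * t))) t := by
      have : HasDerivAt (fun t : ℝ => -(2 * p.C * t)) (-(2 * p.C)) t := by
        simpa using (hasDerivAt_id t).const_mul (-(2 * p.C))
      simpa [mul_comm] using this.exp
    have h2 := (h1.mul (hFider t))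
    have h3 : HasDerivAt (fun t => Real.exp (-(2 * p.C * t)) * ∫ v in t..p.T, g v)
        (-(2 * p.C) * p.xi t - G t) t := by
      refine h2.congr_deriv ?_
      rw [hxi_eq t]
      have he : Real.exp (-(2 * p.C * t)) * Real.exp (2 * p.C * t) = 1 := by
        rw [← Real.exp_add, neg_add_cancel, Real.exp_zero]
      linear_combination (-G t) * he
    exact h3.congr_of_eventuallyEq (Filter.Eventually.of_forall fun s => hxi_eq s)
  have hud : UniqueDiffOn ℝ (Set.Icc (0 : ℝ) p.T) := uniqueDiffOn_Icc hT
  refine ⟨fun t ht => ((hxider t).differentiableAt).differentiableWithinAt, ?_, ?_⟩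
  · intro t ht
    have hd : derivWithin p.xi (Set.Icc 0 p.T) t = -(2 * p.C) * p.xi t - G t :=
      (hxider t).hasDerivWithinAt.derivWithin (hud t ht)
    rw [hd, hGdef]
    dsimp only
    ring
  · rw [hxi_eq p.T, intervalIntegral.integral_same, mul_zero]

end
end
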